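/- Let 0 < d₁ < d₂ be integers and let f ∈ W^{1,1}(𝕊¹;𝕊¹) with deg f = d₁ satisfy f ∧ f' ≥ 0 almost everywhere. Then ∫_{𝕊¹}|f' - g'| ≥ 2π(d₂ - d₁) for every g ∈ W^{1,1}(𝕊¹;𝕊¹) with deg g = d₂. -/

import Mathlib

/-!
Since `|f'| = |φ'|` and `|g'| = |ψ'|` pointwise, the reverse triangle inequality gives
`∫ |f' - g'| ≥ ∫ |ψ'| - ∫ |φ'|`. The total variation `∫ |ψ'|` of the phase of `g` is at least its
total increase `2π d₂`, whereas `f ∧ f' = φ' ≥ 0` makes the total variation of `φ` equal to its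
increase `2π d₁`.
-/

open Real MeasureTheory

/-- `f = e^{iφ}` is a `W^{1,1}` map `𝕊¹ → 𝕊¹` of degree `d`, with phase `φ` and integrable
weak derivative `φ'` of the phase. Note `f ∧ f' = φ'` pointwise a.e. -/
def MemE (d : ℤ) (φ φ' : ℝ → ℝ) : Prop :=
  (∀ θ : ℝ, φ (θ + 2 * π) = φ θ + 2 * π * d) ∧
  (∀ a b : ℝ, IntervalIntegrable φ' volume a b) ∧
  (∀ a b : ℝ, φ b - φ a = ∫ t in a..b, φ' t)

/-- The `W^{1,1}` seminorm distance `∫_{𝕊¹} |f' - g'|`. -/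
noncomputable def dist11 (φ φ' ψ ψ' : ℝ → ℝ) : ℝ :=
  ∫ θ in (0:ℝ)..(2 * π),
    ‖Complex.I * (φ' θ : ℂ) * Complex.exp (Complex.I * (φ θ : ℂ)) -
      Complex.I * (ψ' θ : ℂ) * Complex.exp (Complex.I * (ψ θ : ℂ))‖

noncomputable def expPhaseDeriv (φ φ' : ℝ → ℝ) (θ : ℝ) : ℂ :=
  Complex.I * (φ' θ : ℂ) * Complex.exp (Complex.I * (φ θ : ℂ))

lemma norm_expPhaseDeriv (φ φ' : ℝ → ℝ) (θ : ℝ) : ‖expPhaseDeriv φ φ' θ‖ = |φ' θ| := by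
  simp [expPhaseDeriv, Complex.norm_exp]

lemma dist11_eq_integral_norm_sub_expPhaseDeriv (φ φ' ψ ψ' : ℝ → ℝ) :
    dist11 φ φ' ψ ψ' = ∫ θ in (0 : ℝ)..(2 * π), ‖expPhaseDeriv φ φ' θ - expPhaseDeriv ψ ψ' θ‖ :=
  rfl

lemma intervalIntegral.integral_norm_sub_integral_norm_le {E : Type*} [NormedAddCommGroup E]
    {F G : ℝ → E} {a b : ℝ} (hab : a ≤ b) (hF : IntervalIntegrable F volume a b)
    (hG : IntervalIntegrable G volume a b) :
    (∫ θ in a..b, ‖G θ‖) - ∫ θ in a..b, ‖F θ‖ ≤ ∫ θ in a..b, ‖F θ - G θ‖ := by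
  have hGle : ∫ θ in a..b, ‖G θ‖ ≤ ∫ θ in a..b, (‖F θ - G θ‖ + ‖F θ‖) :=
    intervalIntegral.integral_mono_on hab hG.norm ((hF.sub hG).norm.add hF.norm)
      fun θ _ => by simpa [norm_sub_rev] using norm_le_norm_sub_add (G θ) (F θ)
  rw [intervalIntegral.integral_add (hF.sub hG).norm hF.norm] at hGle
  linarith

namespace MemE

variable {d : ℤ} {φ φ' : ℝ → ℝ}

lemma continuous (hφ : MemE d φ φ') : Continuous φ := by
  obtain ⟨-, hint, hftc⟩ := hφ
  have hprim : φ = fun t => φ 0 + ∫ s in (0 : ℝ)..t, φ' s := by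
    funext t
    linarith [hftc 0 t]
  rw [hprim]
  exact continuous_const.add (intervalIntegral.continuous_primitive hint 0)

lemma intervalIntegrable_expPhaseDeriv (hφ : MemE d φ φ') (a b : ℝ) :
    IntervalIntegrable (expPhaseDeriv φ φ') volume a b := by
  have hcont := hφ.continuous
  have hexp : Continuous fun θ => Complex.exp (Complex.I * (φ θ : ℂ)) := by fun_prop
  refine (hφ.2.1 a b).norm.mono_fun ?_ (.of_forall fun θ => by simp [norm_expPhaseDeriv])
  exact ((Complex.continuous_ofReal.comp_aestronglyMeasurable
    (hφ.2.1 a b).def'.aestronglyMeasurable).const_mul Complex.I).mul hexp.aestronglyMeasurable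

lemma integral_deriv (hφ : MemE d φ φ') : ∫ θ in (0 : ℝ)..(2 * π), φ' θ = 2 * π * d := by
  obtain ⟨hper, -, hftc⟩ := hφ
  have hperiod := hper 0
  rw [zero_add] at hperiod
  linarith [hftc 0 (2 * π)]

lemma le_integral_abs_deriv (hφ : MemE d φ φ') :
    2 * π * d ≤ ∫ θ in (0 : ℝ)..(2 * π), |φ' θ| :=
  hφ.integral_deriv ▸ intervalIntegral.integral_mono_on (by positivity) (hφ.2.1 0 _)
    (hφ.2.1 0 _).abs fun θ _ => le_abs_self (φ' θ)

lemma integral_abs_deriv_of_nonneg (hφ : MemE d φ φ')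
    (hpos : ∀ᵐ θ ∂(volume : Measure ℝ), θ ∈ Set.Ioo 0 (2 * π) → 0 ≤ φ' θ) :
    ∫ θ in (0 : ℝ)..(2 * π), |φ' θ| = 2 * π * d := by
  rw [← hφ.integral_deriv]
  refine intervalIntegral.integral_congr_ae ?_
  rw [Set.uIoc_of_le (by positivity)]
  filter_upwards [hpos, (Ioo_ae_eq_Ioc (μ := volume) (a := (0 : ℝ)) (b := 2 * π)).mem_iff]
    with θ hθ hIoo hIoc
  exact abs_of_nonneg (hθ (hIoo.mpr hIoc))

end MemE

theorem stmt7_general (d₁ d₂ : ℤ) (φ φ' : ℝ → ℝ)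
    (hφ : MemE d₁ φ φ')
    (hpos : ∀ᵐ θ ∂(volume : Measure ℝ), θ ∈ Set.Ioo 0 (2 * π) → 0 ≤ φ' θ)
    (ψ ψ' : ℝ → ℝ) (hψ : MemE d₂ ψ ψ') :
    2 * π * ((d₂ : ℝ) - (d₁ : ℝ)) ≤ dist11 φ φ' ψ ψ' := by
  have hvar := intervalIntegral.integral_norm_sub_integral_norm_le (by positivity)
    (hφ.intervalIntegrable_expPhaseDeriv 0 (2 * π)) (hψ.intervalIntegrable_expPhaseDeriv 0 (2 * π))
  simp only [norm_expPhaseDeriv, hφ.integral_abs_deriv_of_nonneg hpos] at hvar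
  rw [dist11_eq_integral_norm_sub_expPhaseDeriv]
  linarith [hψ.le_integral_abs_deriv]

/-- If `0 < d₁ < d₂` and `f ∈ E_{d₁}` satisfies `f ∧ f' ≥ 0` a.e. (i.e. `φ' ≥ 0` a.e. on a
period), then `∫ |f' - g'| ≥ 2π(d₂ - d₁)` for every `g ∈ E_{d₂}`. -/
theorem stmt7 (d₁ d₂ : ℤ) (h₁ : 0 < d₁) (h₂ : d₁ < d₂) (φ φ' : ℝ → ℝ)
    (hφ : MemE d₁ φ φ')
    (hpos : ∀ᵐ θ ∂(volume : Measure ℝ), θ ∈ Set.Ioo 0 (2 * π) → 0 ≤ φ' θ)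
    (ψ ψ' : ℝ → ℝ) (hψ : MemE d₂ ψ ψ') :
    2 * π * ((d₂ : ℝ) - (d₁ : ℝ)) ≤ dist11 φ φ' ψ ψ' :=
  stmt7_general d₁ d₂ φ φ' hφ hpos ψ ψ' hψ
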